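/- If c₀ = a₁b₀ − a₀b₁ < 0, c₁ = a₂b₀ − a₀b₂ ≤ 0, and c₂ = a₂b₁ − a₁b₂ ≤ 0, with the denominator positive on [0, R], then f(r) = (a₀+a₁r+a₂r²)/(b₀+b₁r+b₂r²) is strictly decreasing on [0, R], so the optimal amplification gain is r = 0 (repeater off). -/

import Mathlib

/-!
Writing `N` and `D` for the numerator and denominator, the cross difference factors as
`N y * D x - N x * D y = (y - x) * (c₀ + c₁ (x + y) + c₂ x y)`. For `0 ≤ x < y` the second
factor is negative under the sign conditions on `c₀, c₁, c₂`, so `f y < f x` wherever the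
denominator is positive.
-/

theorem quadratic_cross_sub (a₀ a₁ a₂ b₀ b₁ b₂ x y : ℝ) :
    (a₀ + a₁ * y + a₂ * y ^ 2) * (b₀ + b₁ * x + b₂ * x ^ 2)
      - (a₀ + a₁ * x + a₂ * x ^ 2) * (b₀ + b₁ * y + b₂ * y ^ 2)
      = (y - x) * ((a₁ * b₀ - a₀ * b₁) + (a₂ * b₀ - a₀ * b₂) * (x + y)
          + (a₂ * b₁ - a₁ * b₂) * (x * y)) := by
  ring

theorem strictAntiOn_quadratic_div_quadratic {a₀ a₁ a₂ b₀ b₁ b₂ : ℝ} {s : Set ℝ}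
    (hs : s ⊆ Set.Ici 0) (hden : ∀ r ∈ s, 0 < b₀ + b₁ * r + b₂ * r ^ 2)
    (hc₀ : a₁ * b₀ - a₀ * b₁ < 0) (hc₁ : a₂ * b₀ - a₀ * b₂ ≤ 0)
    (hc₂ : a₂ * b₁ - a₁ * b₂ ≤ 0) :
    StrictAntiOn (fun r ↦ (a₀ + a₁ * r + a₂ * r ^ 2) / (b₀ + b₁ * r + b₂ * r ^ 2)) s := by
  intro x hx y hy hxy
  have hx₀ : 0 ≤ x := hs hx
  have hy₀ : 0 ≤ y := hs hy
  have hfactor : (a₁ * b₀ - a₀ * b₁) + (a₂ * b₀ - a₀ * b₂) * (x + y)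
      + (a₂ * b₁ - a₁ * b₂) * (x * y) < 0 := by
    have := mul_nonpos_of_nonpos_of_nonneg hc₁ (add_nonneg hx₀ hy₀)
    have := mul_nonpos_of_nonpos_of_nonneg hc₂ (mul_nonneg hx₀ hy₀)
    linarith
  have hcross := quadratic_cross_sub a₀ a₁ a₂ b₀ b₁ b₂ x y
  rw [div_lt_div_iff₀ (hden y hy) (hden x hx)]
  linarith [mul_neg_of_pos_of_neg (sub_pos.mpr hxy) hfactor]

theorem stmt_9_general (a₀ a₁ a₂ b₀ b₁ b₂ R : ℝ)
    (hden : ∀ r ∈ Set.Icc (0 : ℝ) R, 0 < b₀ + b₁ * r + b₂ * r ^ 2)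
    (hc₀ : a₁ * b₀ - a₀ * b₁ < 0) (hc₁ : a₂ * b₀ - a₀ * b₂ ≤ 0)
    (hc₂ : a₂ * b₁ - a₁ * b₂ ≤ 0)
    (f : ℝ → ℝ)
    (hf : ∀ r, f r = (a₀ + a₁ * r + a₂ * r ^ 2) / (b₀ + b₁ * r + b₂ * r ^ 2)) :
    StrictAntiOn f (Set.Icc 0 R) ∧ ∀ x ∈ Set.Icc (0 : ℝ) R, f x ≤ f 0 := by
  obtain rfl : f = _ := funext hf
  have hanti := strictAntiOn_quadratic_div_quadratic (fun _ hr ↦ hr.1) hden hc₀ hc₁ hc₂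
  exact ⟨hanti, fun x hx ↦ hanti.antitoneOn ⟨le_rfl, hx.1.trans hx.2⟩ hx hx.1⟩

/-- If `c₀ < 0`, `c₁ ≤ 0`, `c₂ ≤ 0`, the SINR is strictly decreasing on
`[0, R]`, so the optimal amplification gain is `r = 0` (repeater off). -/
theorem stmt_9 (a₀ a₁ a₂ b₀ b₁ b₂ R : ℝ) (hR : 0 < R)
    (hden : ∀ r ∈ Set.Icc (0 : ℝ) R, 0 < b₀ + b₁ * r + b₂ * r ^ 2)
    (hc₀ : a₁ * b₀ - a₀ * b₁ < 0) (hc₁ : a₂ * b₀ - a₀ * b₂ ≤ 0)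
    (hc₂ : a₂ * b₁ - a₁ * b₂ ≤ 0)
    (f : ℝ → ℝ)
    (hf : ∀ r, f r = (a₀ + a₁ * r + a₂ * r ^ 2) / (b₀ + b₁ * r + b₂ * r ^ 2)) :
    StrictAntiOn f (Set.Icc 0 R) ∧ ∀ x ∈ Set.Icc (0 : ℝ) R, f x ≤ f 0 :=
  stmt_9_general a₀ a₁ a₂ b₀ b₁ b₂ R hden hc₀ hc₁ hc₂ f hf
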